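/- Let y_i, y_j ∈ {0,1}^L with cardinalities k_i, k_j ≤ k_max, and let z_i, z_j ∈ {0,1}^{L(L-1)/2} be their vectors of pairwise products (z_i)_{ℓℓ'} = y_{iℓ}y_{iℓ'} for ℓ < ℓ'. Then ‖z_i - z_j‖ ≤ √(d_H(y_i, y_j) · min(k_max - 1, L - 1)), where d_H is the Hamming distance between y_i and y_j. -/
import Mathlib


open Matrix

/-- Interaction-vector bound: for binary label vectors with cardinalities at
most `k_max` and pairwise-product vectors `zᵢ, zⱼ`,
`‖zᵢ - zⱼ‖ ≤ √(d_H(yᵢ,yⱼ) · min(k_max - 1, L - 1))`. -/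
theorem stmt_19 {L : ℕ} (yi yj : Fin L → ℝ)
    (hyi : ∀ ℓ, yi ℓ = 0 ∨ yi ℓ = 1) (hyj : ∀ ℓ, yj ℓ = 0 ∨ yj ℓ = 1)
    (kmax : ℕ)
    (hki : (∑ ℓ, yi ℓ) ≤ (kmax : ℝ)) (hkj : (∑ ℓ, yj ℓ) ≤ (kmax : ℝ)) :
    let zi : {p : Fin L × Fin L // p.1 < p.2} → ℝ :=
      fun p => yi p.1.1 * yi p.1.2
    let zj : {p : Fin L × Fin L // p.1 < p.2} → ℝ :=
      fun p => yj p.1.1 * yj p.1.2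
    Real.sqrt (∑ p, (zi p - zj p) ^ 2) ≤
      Real.sqrt ((∑ ℓ, |yi ℓ - yj ℓ|) * min ((kmax : ℝ) - 1) ((L : ℝ) - 1)) := by
  intro zi zj
  apply Real.sqrt_le_sqrt
  set d : Fin L → ℝ := fun ℓ => |yi ℓ - yj ℓ| with hd
  set Si : ℝ := ∑ ℓ, yi ℓ with hSi
  set Sj : ℝ := ∑ ℓ, yj ℓ with hSj
  have hSiL : Si ≤ (L : ℝ) := by
    rw [hSi]
    calc ∑ ℓ, yi ℓ ≤ ∑ _ℓ : Fin L, (1 : ℝ) :=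
          Finset.sum_le_sum (fun ℓ _ => by rcases hyi ℓ with h | h <;> simp [h])
      _ = L := by simp
  have hSjL : Sj ≤ (L : ℝ) := by
    rw [hSj]
    calc ∑ ℓ, yj ℓ ≤ ∑ _ℓ : Fin L, (1 : ℝ) :=
          Finset.sum_le_sum (fun ℓ _ => by rcases hyj ℓ with h | h <;> simp [h])
      _ = L := by simp
  set g : Fin L × Fin L → ℝ :=
    fun p => d p.1 * (yi p.1 * yi p.2 + yj p.1 * yj p.2) with hg
  -- step 1: pointwise bound
  have step1 : (∑ p, (zi p - zj p) ^ 2) ≤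
      ∑ p : {p : Fin L × Fin L // p.1 < p.2}, (g p.1 + g p.1.swap) := by
    apply Finset.sum_le_sum
    intro p _
    rcases hyi p.1.1 with h1 | h1 <;> rcases hyi p.1.2 with h2 | h2 <;>
      rcases hyj p.1.1 with h3 | h3 <;> rcases hyj p.1.2 with h4 | h4 <;>
      simp [zi, zj, hg, hd, h1, h2, h3, h4]
  -- convert subtype sum to filter sum
  have e1 : (∑ p : {p : Fin L × Fin L // p.1 < p.2}, (g p.1 + g p.1.swap)) =
      ∑ p ∈ Finset.univ.filter (fun p : Fin L × Fin L => p.1 < p.2), (g p + g p.swap) := by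
    exact (Finset.sum_subtype (p := fun p : Fin L × Fin L => p.1 < p.2)
      (Finset.univ.filter (fun p : Fin L × Fin L => p.1 < p.2))
      (fun p => by simp) (fun p => g p + g p.swap)).symm
  have e2 : (∑ p ∈ Finset.univ.filter (fun p : Fin L × Fin L => p.1 < p.2), g p.swap) =
      ∑ p ∈ Finset.univ.filter (fun p : Fin L × Fin L => p.2 < p.1), g p := by
    apply Finset.sum_nbij' (i := Prod.swap) (j := Prod.swap) <;> simp
  have e3 : (∑ p ∈ Finset.univ.filter (fun p : Fin L × Fin L => p.1 < p.2), g p)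
      + (∑ p ∈ Finset.univ.filter (fun p : Fin L × Fin L => p.2 < p.1), g p)
      = (∑ p : Fin L × Fin L, g p)
        - ∑ p ∈ Finset.univ.filter (fun p : Fin L × Fin L => p.1 = p.2), g p := by
    have h4 : (∑ p : Fin L × Fin L, g p)
        = (∑ p ∈ Finset.univ.filter (fun p : Fin L × Fin L => p.1 < p.2), g p)
          + ((∑ p ∈ Finset.univ.filter (fun p : Fin L × Fin L => p.2 < p.1), g p)
          + ∑ p ∈ Finset.univ.filter (fun p : Fin L × Fin L => p.1 = p.2), g p) := by
      rw [← Finset.sum_filter_add_sum_filter_not Finset.univ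
        (fun p : Fin L × Fin L => p.1 < p.2) g]
      congr 1
      rw [← Finset.sum_filter_add_sum_filter_not
        (Finset.univ.filter (fun p : Fin L × Fin L => ¬ p.1 < p.2))
        (fun p : Fin L × Fin L => p.2 < p.1) g]
      congr 1 <;> [skip; skip] <;>
      · apply Finset.sum_congr _ (fun _ _ => rfl)
        ext p
        simp only [Finset.mem_filter, Finset.mem_univ, true_and, Fin.lt_def, Fin.ext_iff]
        omega
    rw [h4]; ring
  -- total sum via Fubini
  have e4 : (∑ p : Fin L × Fin L, g p) = ∑ ℓ, d ℓ * (yi ℓ * Si + yj ℓ * Sj) := by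
    rw [Fintype.sum_prod_type]
    apply Finset.sum_congr rfl
    intro ℓ _
    simp only [hg]
    rw [← Finset.mul_sum]
    congr 1
    rw [Finset.sum_add_distrib, ← Finset.mul_sum, ← Finset.mul_sum]
  -- diagonal sum
  have e5 : (∑ p ∈ Finset.univ.filter (fun p : Fin L × Fin L => p.1 = p.2), g p)
      = ∑ ℓ, d ℓ * (yi ℓ * yi ℓ + yj ℓ * yj ℓ) := by
    rw [show (Finset.univ.filter (fun p : Fin L × Fin L => p.1 = p.2))
        = Finset.univ.diag by ext p; simp [Finset.mem_diag, eq_comm]]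
    rw [Finset.sum_diag]
  -- combine
  have key : (∑ p, (zi p - zj p) ^ 2) ≤
      ∑ ℓ, d ℓ * (yi ℓ * (Si - yi ℓ) + yj ℓ * (Sj - yj ℓ)) := by
    calc (∑ p, (zi p - zj p) ^ 2) ≤ _ := step1
      _ = _ := e1
      _ = (∑ p ∈ Finset.univ.filter (fun p : Fin L × Fin L => p.1 < p.2), g p)
          + ∑ p ∈ Finset.univ.filter (fun p : Fin L × Fin L => p.2 < p.1), g p := by
            rw [Finset.sum_add_distrib, e2]
      _ = (∑ ℓ, d ℓ * (yi ℓ * Si + yj ℓ * Sj))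
          - ∑ ℓ, d ℓ * (yi ℓ * yi ℓ + yj ℓ * yj ℓ) := by rw [e3, e4, e5]
      _ = ∑ ℓ, d ℓ * (yi ℓ * (Si - yi ℓ) + yj ℓ * (Sj - yj ℓ)) := by
            rw [← Finset.sum_sub_distrib]; apply Finset.sum_congr rfl; intro ℓ _; ring
  refine key.trans ?_
  rw [Finset.sum_mul]
  apply Finset.sum_le_sum
  intro ℓ _
  rcases hyi ℓ with h1 | h1 <;> rcases hyj ℓ with h2 | h2
  · simp [hd, h1, h2]
  · have hd1 : d ℓ = 1 := by simp [hd, h1, h2]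
    have h5 : d ℓ * (yi ℓ * (Si - yi ℓ) + yj ℓ * (Sj - yj ℓ)) = Sj - 1 := by
      rw [hd1, h1, h2]; ring
    have hd1' : |yi ℓ - yj ℓ| = 1 := by rw [h1, h2]; norm_num
    rw [h5, hd1', one_mul]
    exact le_min (by linarith) (by linarith)
  · have hd1 : d ℓ = 1 := by simp [hd, h1, h2]
    have h5 : d ℓ * (yi ℓ * (Si - yi ℓ) + yj ℓ * (Sj - yj ℓ)) = Si - 1 := by
      rw [hd1, h1, h2]; ring
    have hd1' : |yi ℓ - yj ℓ| = 1 := by rw [h1, h2]; norm_num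
    rw [h5, hd1', one_mul]
    exact le_min (by linarith) (by linarith)
  · simp [hd, h1, h2]
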